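/- The function g(x) = (1/2){ln((x−1)/(e·ln x)) + (ln x)/(x−1)} is (strictly) monotonically increasing on (1, ∞). -/

import Mathlib

/-!
Differentiating, `g'(x) = (x - 1 - ln x)(x ln x - (x - 1)) / (2 x ln x (x - 1)²)`.
On `(1, ∞)` both factors of the numerator are positive, by the strict forms of
`ln x < x - 1` and `1 - 1/x < ln x`, so `g' > 0`.
-/

open Real Set

noncomputable def gFun (x : ℝ) : ℝ :=
  (1/2) * (Real.log ((x - 1) / (Real.exp 1 * Real.log x)) + Real.log x / (x - 1))

lemma hasDerivAt_gFun {x : ℝ} (hx : 1 < x) :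
    HasDerivAt gFun
      ((x - 1 - log x) * (x * log x - (x - 1)) / (2 * x * log x * (x - 1) ^ 2)) x := by
  have hx0 : x ≠ 0 := by positivity
  have hx1 : x - 1 ≠ 0 := by linarith
  have hlog : log x ≠ 0 := (log_pos hx).ne'
  have hlog' : HasDerivAt log x⁻¹ x := hasDerivAt_log hx0
  have hsub : HasDerivAt (fun y => y - 1) 1 x := (hasDerivAt_id x).sub_const 1
  have hden : exp 1 * log x ≠ 0 := mul_ne_zero (exp_ne_zero 1) hlog
  have hquot := hsub.div (hlog'.const_mul (exp 1)) hden
  have hg := ((hquot.log (div_ne_zero hx1 hden)).add (hlog'.div hsub hx1)).const_mul (1/2 : ℝ)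
  refine HasDerivAt.congr_deriv (f := gFun) hg ?_
  simp only [Pi.div_apply]
  field_simp
  ring

/-- `g` is strictly monotonically increasing on `(1, ∞)`. -/
theorem stmt_9 : StrictMonoOn gFun (Set.Ioi (1:ℝ)) := by
  refine strictMonoOn_of_deriv_pos (convex_Ioi 1)
    (fun x hx => (hasDerivAt_gFun hx).continuousAt.continuousWithinAt) fun x hx => ?_
  rw [interior_Ioi, mem_Ioi] at hx
  rw [(hasDerivAt_gFun hx).deriv]
  have hlog := log_pos hx
  have hupper := log_lt_sub_one_of_pos (by linarith) (ne_of_gt hx)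
  have hlower := self_sub_one_lt_mul_log (by linarith) (ne_of_gt hx)
  exact div_pos (mul_pos (by linarith) (by linarith)) (by positivity)
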